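/- Let a and b be coprime positive integers and let μ ∈ R(a,b). Then no cell c of the Young diagram of μ satisfies a·arm(c) − b·leg(c) = −a or a·arm(c) − b·leg(c) = b; consequently h⁺_{b,a}(μ) = h⁻_{b,a}(μ). -/

import Mathlib

/-- `μ : ℕ → ℕ` represents a partition in `R(a,b)`: the value `μ i` is the
`(i+1)`-th part; the parts are weakly decreasing, at most `b`, and zero from
index `a` on (so the Young diagram of `μ` fits in an `a × b` box). -/
def InBox (a b : ℕ) (μ : ℕ → ℕ) : Prop :=
  (∀ i j : ℕ, i ≤ j → μ j ≤ μ i) ∧ μ 0 ≤ b ∧ ∀ i, a ≤ i → μ i = 0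

/-- `μ ∈ D(a,b)`: `μ ∈ R(a,b)` and `a·μ_j ≤ b·(a−j)` for all (1-indexed) `j`;
in terms of the 0-indexed parts this reads `a·μ(i) ≤ b·(a−1−i)`. -/
def InTriangle (a b : ℕ) (μ : ℕ → ℕ) : Prop :=
  InBox a b μ ∧ ∀ i, i < a → a * μ i ≤ b * (a - 1 - i)

/-- The leg of the cell in (0-indexed) row `i`, column `j` of the Young diagram
of `μ`: the number of cells strictly below it in its column. -/
noncomputable def leg (μ : ℕ → ℕ) (i j : ℕ) : ℕ :=
  {i' : ℕ | i < i' ∧ j < μ i'}.ncard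

/-- The arm of the cell in row `i`, column `j` (as an integer): the number of
cells strictly to its right in its row. -/
def armZ (μ : ℕ → ℕ) (i j : ℕ) : ℤ := (μ i : ℤ) - 1 - j

/-- `h⁺_{b,a}(μ)`: the number of cells `c` of `μ` with
`−a < a·arm(c) − b·leg(c) ≤ b`. -/
noncomputable def hplus (a b : ℕ) (μ : ℕ → ℕ) : ℕ :=
  {c : ℕ × ℕ | c.2 < μ c.1 ∧
    -(a : ℤ) < (a : ℤ) * armZ μ c.1 c.2 - (b : ℤ) * leg μ c.1 c.2 ∧
    (a : ℤ) * armZ μ c.1 c.2 - (b : ℤ) * leg μ c.1 c.2 ≤ (b : ℤ)}.ncard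

/-- The frontier of `μ ∈ R(a,b)`: the lattice word from `(0,0)` to `(b,a)`
(`true` = N, `false` = E) tracing the boundary of the diagram of `μ` inside the
`a × b` box; its `j`-th N (from the start) is preceded by exactly `μ_{a+1−j}` E's. -/
def frontierWord (a b : ℕ) (μ : ℕ → ℕ) : List Bool :=
  ((List.range a).flatMap fun y =>
    List.replicate (μ (a - 1 - y) - μ (a - y)) false ++ [true]) ++
  List.replicate (b - μ 0) false

/-- The level `l_i = b·(#N) − a·(#E)` of the lattice point reached after the
first `i` steps of the word `w` (with `true` = N, `false` = E). -/
def levelAt (a b : ℕ) (w : List Bool) (i : ℕ) : ℤ :=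
  (b : ℤ) * (w.take i).count true - (a : ℤ) * (w.take i).count false

/-- `ml_{b,a}`: the minimum of the levels `l_0, l_1, …, l_{length w}` along `w`. -/
def minLevel (a b : ℕ) (w : List Bool) : ℤ :=
  ((Finset.range (w.length + 1)).image fun i => levelAt a b w i).min'
    (Finset.Nonempty.image ⟨0, Finset.mem_range.mpr (Nat.succ_pos _)⟩ _)

/-- `h⁻_{b,a}(μ)`: the number of cells `c` of `μ` with
`−a ≤ a·arm(c) − b·leg(c) < b`. -/
noncomputable def hminus (a b : ℕ) (μ : ℕ → ℕ) : ℕ :=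
  {c : ℕ × ℕ | c.2 < μ c.1 ∧
    -(a : ℤ) ≤ (a : ℤ) * armZ μ c.1 c.2 - (b : ℤ) * leg μ c.1 c.2 ∧
    (a : ℤ) * armZ μ c.1 c.2 - (b : ℤ) * leg μ c.1 c.2 < (b : ℤ)}.ncard

/- A cell has `0 ≤ arm < b` and `0 ≤ leg < a`. If `a·arm − b·leg = −a` then `a ∣ b·leg`, so
`a ∣ leg` by coprimality, forcing `leg = 0` and `a·(arm + 1) = 0`; the value `b` is excluded in the
same way with `(a, arm)` and `(b, leg)` swapped. The windows defining `h⁺` and `h⁻` differ only at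
these two values. -/

theorem IsCoprime.mul_sub_mul_ne_neg {a b x y : ℤ} (h : IsCoprime a b) (hx : 0 ≤ x) (hy : 0 ≤ y)
    (hya : y < a) : a * x - b * y ≠ -a := by
  intro heq
  have hay : a ∣ y := h.dvd_of_dvd_mul_left ⟨x + 1, by linarith⟩
  have hy0 : y = 0 := by
    by_contra hne
    linarith [Int.le_of_dvd (lt_of_le_of_ne hy (Ne.symm hne)) hay]
  subst hy0
  nlinarith

namespace InBox

variable {a b : ℕ} {μ : ℕ → ℕ}

theorem lt_of_pos {i : ℕ} (hμ : InBox a b μ) (hi : 0 < μ i) : i < a := by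
  by_contra! hai
  simp [hμ.2.2 i hai] at hi

theorem le_bound (hμ : InBox a b μ) (i : ℕ) : μ i ≤ b :=
  (hμ.1 0 i i.zero_le).trans hμ.2.1

theorem armZ_lt {i j : ℕ} (hμ : InBox a b μ) : armZ μ i j < b := by
  have := hμ.le_bound i
  unfold armZ
  omega

theorem leg_lt {i j : ℕ} (hμ : InBox a b μ) (hj : j < μ i) : leg μ i j < a := by
  have hbelow : {i' : ℕ | i < i' ∧ j < μ i'} ⊆ Set.Ioo i a :=
    fun i' ⟨hii', hji'⟩ => ⟨hii', hμ.lt_of_pos (by omega)⟩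
  have hcard := Set.ncard_le_ncard hbelow (Set.finite_Ioo i a)
  have hia := hμ.lt_of_pos (by omega : 0 < μ i)
  rw [Set.ncard_Ioo_nat] at hcard
  unfold leg
  omega

theorem hook_ne {i j : ℕ} (hμ : InBox a b μ) (hab : Nat.Coprime a b) (hj : j < μ i) :
    (a : ℤ) * armZ μ i j - (b : ℤ) * leg μ i j ≠ -(a : ℤ) ∧
      (a : ℤ) * armZ μ i j - (b : ℤ) * leg μ i j ≠ (b : ℤ) := by
  have hco : IsCoprime (a : ℤ) (b : ℤ) := Nat.isCoprime_iff_coprime.mpr hab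
  have harm : 0 ≤ armZ μ i j := by unfold armZ; omega
  have hleg : (leg μ i j : ℤ) < a := by exact_mod_cast hμ.leg_lt hj
  refine ⟨hco.mul_sub_mul_ne_neg harm (by positivity) hleg, fun heq => ?_⟩
  exact hco.symm.mul_sub_mul_ne_neg (x := leg μ i j) (by positivity) harm hμ.armZ_lt
    (by linarith)

end InBox

theorem hplus_eq_hminus {a b : ℕ} {μ : ℕ → ℕ}
    (hne : ∀ i j : ℕ, j < μ i →
      (a : ℤ) * armZ μ i j - (b : ℤ) * leg μ i j ≠ -(a : ℤ) ∧
      (a : ℤ) * armZ μ i j - (b : ℤ) * leg μ i j ≠ (b : ℤ)) :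
    hplus a b μ = hminus a b μ := by
  unfold hplus hminus
  congr 1
  ext ⟨i, j⟩
  simp only [Set.mem_ofPred_eq]
  refine and_congr_right fun hj => ?_
  have := hne i j hj
  omega

theorem stmt16_general (a b : ℕ) (hab : Nat.Coprime a b)
    (μ : ℕ → ℕ) (hμ : InBox a b μ) :
    (∀ i j : ℕ, j < μ i →
      (a : ℤ) * armZ μ i j - (b : ℤ) * leg μ i j ≠ -(a : ℤ) ∧
      (a : ℤ) * armZ μ i j - (b : ℤ) * leg μ i j ≠ (b : ℤ)) ∧
    hplus a b μ = hminus a b μ :=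
  have hne := fun _ _ => hμ.hook_ne hab
  ⟨hne, hplus_eq_hminus hne⟩

/-- for coprime positive `a, b` and `μ ∈ R(a,b)`, no cell `c` of
`μ` satisfies `a·arm(c) − b·leg(c) = −a` or `a·arm(c) − b·leg(c) = b`;
consequently `h⁺_{b,a}(μ) = h⁻_{b,a}(μ)`. -/
theorem stmt16 (a b : ℕ) (ha : 0 < a) (hb : 0 < b) (hab : Nat.Coprime a b)
    (μ : ℕ → ℕ) (hμ : InBox a b μ) :
    (∀ i j : ℕ, j < μ i →
      (a : ℤ) * armZ μ i j - (b : ℤ) * leg μ i j ≠ -(a : ℤ) ∧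
      (a : ℤ) * armZ μ i j - (b : ℤ) * leg μ i j ≠ (b : ℤ)) ∧
    hplus a b μ = hminus a b μ :=
  stmt16_general a b hab μ hμ
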